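/- arXiv:2110.08837 — 7 statements merged into one kernel-verified Lean document; each statement's English description precedes it below -/
import Mathlib

section
/- Let Δ be a type, let R and S be relations on Δ (i.e., subsets of Δ × Δ, with S playing the role of the interpretation of the designated role R_{(∃R.C)}), and let C ⊆ Δ. For a relation T on Δ define dom(T) = {x | ∃ y, (x,y) ∈ T} and cod(T) = {y | ∃ x, (x,y) ∈ T}. Assume S ⊆ R and cod(S) ⊆ C. Then dom(S) = {x | ∃ y, (x,y) ∈ R ∧ y ∈ C} if and only if for every relation R' on Δ with R' ⊆ R and cod(R') ⊆ C one has dom(R') ⊆ dom(S). (Compatibility of the category-theoretical semantics of existential restriction with the set-theoretical semantics.) -/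
/-- Compatibility of the category-theoretical semantics of existential
restriction with the set-theoretical semantics.  `S` plays the role of the
interpretation of the designated role `R_{(∃R.C)}`. -/
theorem exists_restriction_compat {Δ : Type*} (R S : Set (Δ × Δ)) (C : Set Δ)
    (hSR : S ⊆ R)
    (hcod : {y | ∃ x, (x, y) ∈ S} ⊆ C) :
    {x | ∃ y, (x, y) ∈ S} = {x | ∃ y, (x, y) ∈ R ∧ y ∈ C} ↔
      ∀ R' : Set (Δ × Δ), R' ⊆ R → {y | ∃ x, (x, y) ∈ R'} ⊆ C →
        {x | ∃ y, (x, y) ∈ R'} ⊆ {x | ∃ y, (x, y) ∈ S} := by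
  constructor
  · intro h R' hR' hc x ⟨y, hy⟩
    rw [h]
    exact ⟨y, hR' hy, hc ⟨x, hy⟩⟩
  · intro h
    apply Set.Subset.antisymm
    · rintro x ⟨y, hy⟩
      exact ⟨y, hSR hy, hcod ⟨x, hy⟩⟩
    · rintro x ⟨y, hR, hC⟩
      exact h {p | p ∈ R ∧ p.2 ∈ C} (fun p hp => hp.1)
        (fun y ⟨x, hx⟩ => hx.2) ⟨y, hR, hC⟩
end

section
/- Let Δ be a type, let R be a relation on Δ (a subset of Δ × Δ), and let C, F be subsets of Δ (F playing the role of the interpretation (∀R.C)^I). For a relation T on Δ define dom(T) = {x | ∃ y, (x,y) ∈ T} and cod(T) = {y | ∃ x, (x,y) ∈ T}. Then F = {x | ∀ y, (x,y) ∈ R → y ∈ C} if and only if the following two conditions hold: (i) F equals the complement in Δ of the set {x | ∃ y, (x,y) ∈ R ∧ y ∉ C}; and (ii) for every relation R' on Δ with R' ⊆ R, if dom(R') ⊆ F then cod(R') ⊆ C. (Compatibility of the category-theoretical semantics of universal restriction with the set-theoretical semantics.) -/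
/-- Compatibility of the category-theoretical semantics of universal
restriction with the set-theoretical semantics.  `F` plays the role of the
interpretation `(∀R.C)^I`. -/
theorem forall_restriction_compat {Δ : Type*} (R : Set (Δ × Δ)) (C F : Set Δ) :
    F = {x | ∀ y, (x, y) ∈ R → y ∈ C} ↔
      (F = Set.univ \ {x | ∃ y, (x, y) ∈ R ∧ y ∉ C} ∧
       ∀ R' : Set (Δ × Δ), R' ⊆ R →
         {x | ∃ y, (x, y) ∈ R'} ⊆ F → {y | ∃ x, (x, y) ∈ R'} ⊆ C) := by
  constructor
  · rintro rfl
    constructor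
    · ext x; simp [not_exists]
    · rintro R' hsub hdom y ⟨x, hxy⟩
      exact hdom ⟨y, hxy⟩ y (hsub hxy)
  · rintro ⟨hF, -⟩
    subst hF
    ext x; simp [not_exists]
end

section
/- In the two-preorder structure described in the context, for every role object R ∈ Q and concept objects C, D ∈ P: if C ≤ D then ∃R.C ≤ ∃R.D (monotonicity of existential restriction in its filler). -/
/-- Two-preorder structure giving the category-theoretical semantics of the
ALC constructors: `P` is a preorder of concept objects, `Q` a preorder of
role objects, with `dom`, `cod` functors and existential restrictions. -/
structure ALCExistStruct (P Q : Type*) [Preorder P] [Preorder Q] where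
  bot : P
  top : P
  sup : P → P → P
  inf : P → P → P
  neg : P → P
  bot_le : ∀ x : P, bot ≤ x
  le_top : ∀ x : P, x ≤ top
  disj1l : ∀ x y : P, x ≤ sup x y
  disj1r : ∀ x y : P, y ≤ sup x y
  disj2 : ∀ x y z : P, x ≤ z → y ≤ z → sup x y ≤ z
  conj1l : ∀ x y : P, inf x y ≤ x
  conj1r : ∀ x y : P, inf x y ≤ y
  conj2 : ∀ x y z : P, z ≤ x → z ≤ y → z ≤ inf x y
  distr : ∀ x y z : P, inf x (sup y z) ≤ sup (inf x y) (inf x z)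
  neg1 : ∀ x : P, inf x (neg x) ≤ bot
  neg2 : ∀ x : P, top ≤ sup x (neg x)
  neg3 : ∀ x z : P, inf x z ≤ bot → z ≤ neg x
  neg4 : ∀ x z : P, top ≤ sup x z → neg x ≤ z
  Rbot : Q
  Rtop : Q
  Rbot_le : ∀ r : Q, Rbot ≤ r
  le_Rtop : ∀ r : Q, r ≤ Rtop
  dom : Q → P
  cod : Q → P
  dom_mono : ∀ r s : Q, r ≤ s → dom r ≤ dom s
  cod_mono : ∀ r s : Q, r ≤ s → cod r ≤ cod s
  dom_Rbot : dom Rbot ≤ bot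
  cod_Rbot : cod Rbot ≤ bot
  le_Rbot : ∀ r : Q, (dom r ≤ bot ∨ cod r ≤ bot) → r ≤ Rbot
  ex : Q → P → P
  exR : Q → P → Q
  exR_le : ∀ (R : Q) (C : P), exR R C ≤ R
  cod_exR_le : ∀ (R : Q) (C : P), cod (exR R C) ≤ C
  ex_le_dom_exR : ∀ (R : Q) (C : P), ex R C ≤ dom (exR R C)
  dom_exR_le_ex : ∀ (R : Q) (C : P), dom (exR R C) ≤ ex R C
  ex_univ : ∀ (R : Q) (C : P) (r : Q), r ≤ R → cod r ≤ C →
    dom r ≤ dom (exR R C)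


/-- Monotonicity of existential restriction in its filler. -/
theorem ex_mono {P Q : Type*} [Preorder P] [Preorder Q]
    (S : ALCExistStruct P Q) (R : Q) (C D : P) (h : C ≤ D) :
    S.ex R C ≤ S.ex R D :=
  le_trans (S.ex_le_dom_exR R C) <| le_trans
    (S.ex_univ R D (S.exR R C) (S.exR_le R C) (le_trans (S.cod_exR_le R C) h))
    (S.dom_exR_le_ex R D)
end

section
/- In the two-preorder structure with universal restrictions described in the context, for every role object R ∈ Q and concept objects C, D ∈ P: if C ≤ D then ∀R.C ≤ ∀R.D (monotonicity of universal restriction in its filler). -/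
/-- Extension with the category-theoretical semantics of universal
restriction. -/
structure ALCExistAllStruct (P Q : Type*) [Preorder P] [Preorder Q]
    extends ALCExistStruct P Q where
  all : Q → P → P
  all_le_neg_ex : ∀ (R : Q) (C : P), all R C ≤ neg (ex R (neg C))
  neg_ex_le_all : ∀ (R : Q) (C : P), neg (ex R (neg C)) ≤ all R C
  all_univ : ∀ (R : Q) (C : P) (r : Q), r ≤ R → dom r ≤ all R C → cod r ≤ C


/-- Monotonicity of universal restriction in its filler. -/
theorem all_mono {P Q : Type*} [Preorder P] [Preorder Q]
    (S : ALCExistAllStruct P Q) (R : Q) (C D : P) (h : C ≤ D) :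
    S.all R C ≤ S.all R D := by
  have anti : ∀ x y : P, x ≤ y → S.neg y ≤ S.neg x := fun x y hxy =>
    S.neg3 _ _ (le_trans (S.conj2 _ _ _ (le_trans (S.conj1l _ _) hxy) (S.conj1r _ _)) (S.neg1 y))
  have hex : S.ex R (S.neg D) ≤ S.ex R (S.neg C) := by
    calc S.ex R (S.neg D) ≤ S.dom (S.exR R (S.neg D)) := S.ex_le_dom_exR _ _
    _ ≤ S.dom (S.exR R (S.neg C)) := S.ex_univ _ _ _ (S.exR_le _ _)
        (le_trans (S.cod_exR_le _ _) (anti _ _ h))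
    _ ≤ S.ex R (S.neg C) := S.dom_exR_le_ex _ _
  calc S.all R C ≤ S.neg (S.ex R (S.neg C)) := S.all_le_neg_ex _ _
  _ ≤ S.neg (S.ex R (S.neg D)) := anti _ _ hex
  _ ≤ S.all R D := S.neg_ex_le_all _ _
end

section
/- In the two-preorder structure with universal restrictions described in the context, let R ∈ Q be a role object and C, D ∈ P concept objects, and suppose there exists a role object R_X ∈ Q with R_X ≤ R_{(∃R.D)} and with dom(R_X) ≤ ∃R.D ⊓ ∀R.C and ∃R.D ⊓ ∀R.C ≤ dom(R_X). Then ∃R.D ⊓ ∀R.C ≤ ∃R.(D ⊓ C). -/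
/-- `∃R.D ⊓ ∀R.C ⟶ ∃R.(D ⊓ C)`, given a role object `R_X` with
`R_X ⟶ R_{(∃R.D)}` and `dom R_X ⟷ ∃R.D ⊓ ∀R.C`. -/
theorem ex_inf_all_le_ex_inf {P Q : Type*} [Preorder P] [Preorder Q]
    (S : ALCExistAllStruct P Q) (R : Q) (C D : P)
    (RX : Q) (h1 : RX ≤ S.exR R D)
    (h2 : S.dom RX ≤ S.inf (S.ex R D) (S.all R C))
    (h3 : S.inf (S.ex R D) (S.all R C) ≤ S.dom RX) :
    S.inf (S.ex R D) (S.all R C) ≤ S.ex R (S.inf D C) := by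
  have hRX_R : RX ≤ R := le_trans h1 (S.exR_le R D)
  have hcodD : S.cod RX ≤ D := le_trans (S.cod_mono _ _ h1) (S.cod_exR_le R D)
  have hcodC : S.cod RX ≤ C :=
    S.all_univ R C RX hRX_R (le_trans h2 (S.conj1r _ _))
  have hcod : S.cod RX ≤ S.inf D C := S.conj2 _ _ _ hcodD hcodC
  exact le_trans h3 (le_trans (S.ex_univ R (S.inf D C) RX hRX_R hcod)
    (S.dom_exR_le_ex R (S.inf D C)))
end

section
/- Soundness of categorical arrows (Theorem 1): let O be an ALC ontology and let ⟶_O be the arrow relation of the ontology category defined in the context. For all ALC concepts X and Y, if X ⟶_O Y then O ⊨ X ⊑ Y under set-theoretical semantics (i.e., X^I ⊆ Y^I for every model I of O). -/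
/-- ALC concepts over concept names `CN` and role names `RN`. -/
inductive ALCConcept (CN RN : Type) where
  | atom : CN → ALCConcept CN RN
  | top : ALCConcept CN RN
  | bot : ALCConcept CN RN
  | neg : ALCConcept CN RN → ALCConcept CN RN
  | inf : ALCConcept CN RN → ALCConcept CN RN → ALCConcept CN RN
  | sup : ALCConcept CN RN → ALCConcept CN RN → ALCConcept CN RN
  | ex : RN → ALCConcept CN RN → ALCConcept CN RN
  | all : RN → ALCConcept CN RN → ALCConcept CN RN

/-- An interpretation: a nonempty domain together with interpretations of
concept names and role names. -/
structure ALCInterp (CN RN : Type) where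
  Δ : Type
  nonempty : Nonempty Δ
  conceptI : CN → Set Δ
  roleI : RN → Set (Δ × Δ)

/-- Set-theoretical semantics of ALC concepts. -/
def ALCInterp.interp {CN RN : Type} (I : ALCInterp CN RN) :
    ALCConcept CN RN → Set I.Δ
  | .atom A => I.conceptI A
  | .top => Set.univ
  | .bot => ∅
  | .neg C => (I.interp C)ᶜ
  | .inf C D => I.interp C ∩ I.interp D
  | .sup C D => I.interp C ∪ I.interp D
  | .ex R C => {x | ∃ y, (x, y) ∈ I.roleI R ∧ y ∈ I.interp C}
  | .all R C => {x | ∀ y, (x, y) ∈ I.roleI R → y ∈ I.interp C}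

/-- `I` is a model of the ontology `O` (a set of GCIs `E ⊑ F`). -/
def ALCInterp.isModel {CN RN : Type} (I : ALCInterp CN RN)
    (O : Set (ALCConcept CN RN × ALCConcept CN RN)) : Prop :=
  ∀ p ∈ O, I.interp p.1 ⊆ I.interp p.2

/-- The arrow relation `⟶_O` of the ontology category: the smallest reflexive
and transitive relation on ALC concepts containing the listed arrows. -/
inductive ALCArrow {CN RN : Type} (O : Set (ALCConcept CN RN × ALCConcept CN RN)) :
    ALCConcept CN RN → ALCConcept CN RN → Prop
  | refl (X : ALCConcept CN RN) : ALCArrow O X X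
  | trans {X Y Z : ALCConcept CN RN} :
      ALCArrow O X Y → ALCArrow O Y Z → ALCArrow O X Z
  | bot_le (X : ALCConcept CN RN) : ALCArrow O .bot X
  | le_top (X : ALCConcept CN RN) : ALCArrow O X .top
  | gci {E F : ALCConcept CN RN} (h : (E, F) ∈ O) :
      ALCArrow O .top (.sup (.neg E) F)
  | sup_left (C D : ALCConcept CN RN) : ALCArrow O C (.sup C D)
  | sup_right (C D : ALCConcept CN RN) : ALCArrow O D (.sup C D)
  | sup_univ {C D X : ALCConcept CN RN} :
      ALCArrow O C X → ALCArrow O D X → ALCArrow O (.sup C D) X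
  | inf_left (C D : ALCConcept CN RN) : ALCArrow O (.inf C D) C
  | inf_right (C D : ALCConcept CN RN) : ALCArrow O (.inf C D) D
  | inf_univ {C D X : ALCConcept CN RN} :
      ALCArrow O X C → ALCArrow O X D → ALCArrow O X (.inf C D)
  | distrib (C D E : ALCConcept CN RN) :
      ALCArrow O (.inf C (.sup D E)) (.sup (.inf C D) (.inf C E))
  | neg_bot (C : ALCConcept CN RN) : ALCArrow O (.inf C (.neg C)) .bot
  | neg_top (C : ALCConcept CN RN) : ALCArrow O .top (.sup C (.neg C))
  | neg_max {C X : ALCConcept CN RN} :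
      ALCArrow O (.inf C X) .bot → ALCArrow O X (.neg C)
  | neg_min {C X : ALCConcept CN RN} :
      ALCArrow O .top (.sup C X) → ALCArrow O (.neg C) X
  | ex_bot {C : ALCConcept CN RN} (R : RN) :
      ALCArrow O C .bot → ALCArrow O (.ex R C) .bot
  | ex_mono {C D : ALCConcept CN RN} (R : RN) :
      ALCArrow O C D → ALCArrow O (.ex R C) (.ex R D)
  | all_def1 (R : RN) (C : ALCConcept CN RN) :
      ALCArrow O (.all R C) (.neg (.ex R (.neg C)))
  | all_def2 (R : RN) (C : ALCConcept CN RN) :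
      ALCArrow O (.neg (.ex R (.neg C))) (.all R C)
  | ex_all (R : RN) (C D : ALCConcept CN RN) :
      ALCArrow O (.inf (.ex R D) (.all R C)) (.ex R (.inf D C))


/-- Soundness of categorical arrows (Theorem 1): every arrow `X ⟶_O Y` of the
ontology category yields the entailment `O ⊨ X ⊑ Y` under set-theoretical
semantics. -/
theorem arrow_sound {CN RN : Type}
    (O : Set (ALCConcept CN RN × ALCConcept CN RN)) (hfin : O.Finite)
    (X Y : ALCConcept CN RN) (h : ALCArrow O X Y) :
    ∀ I : ALCInterp CN RN, I.isModel O → I.interp X ⊆ I.interp Y := by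
  induction h with intro I hM
  | refl X => exact fun _ h => h
  | trans h1 h2 ih1 ih2 => exact (ih1 I hM).trans (ih2 I hM)
  | bot_le X => exact fun x hx => hx.elim
  | le_top X => exact fun x _ => trivial
  | gci h =>
    rename_i E F
    intro x _
    by_cases hx : x ∈ I.interp E
    · exact Or.inr (hM _ h hx)
    · exact Or.inl hx
  | sup_left C D => exact fun x hx => Or.inl hx
  | sup_right C D => exact fun x hx => Or.inr hx
  | sup_univ h1 h2 ih1 ih2 => exact fun x hx => hx.elim (fun h => ih1 I hM h) (fun h => ih2 I hM h)
  | inf_left C D => exact fun x hx => hx.1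
  | inf_right C D => exact fun x hx => hx.2
  | inf_univ h1 h2 ih1 ih2 => exact fun x hx => ⟨ih1 I hM hx, ih2 I hM hx⟩
  | distrib C D E => exact fun x hx => hx.2.elim (fun h => Or.inl ⟨hx.1, h⟩) (fun h => Or.inr ⟨hx.1, h⟩)
  | neg_bot C => exact fun x hx => (hx.2 hx.1)
  | neg_top C =>
    intro x _
    by_cases hx : x ∈ I.interp C
    · exact Or.inl hx
    · exact Or.inr hx
  | neg_max h ih => exact fun x hx hc => ih I hM ⟨hc, hx⟩
  | neg_min h ih => intro x hx
                    rcases ih I hM (trivial) with h1 | h1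
                    · exact absurd h1 hx
                    · exact h1
  | ex_bot R h ih => exact fun x ⟨y, hy, hc⟩ => (ih I hM hc).elim
  | ex_mono R h ih => exact fun x ⟨y, hy, hc⟩ => ⟨y, hy, ih I hM hc⟩
  | all_def1 R C => exact fun x hx ⟨y, hy, hnc⟩ => hnc (hx y hy)
  | all_def2 R C =>
    intro x hx y hy
    by_contra hc
    exact hx ⟨y, hy, hc⟩
  | ex_all R C D => exact fun x ⟨⟨y, hy, hd⟩, hall⟩ => ⟨y, hy, hd, hall y hy⟩
end

section
/- Completeness of categorical unsatisfiability (Lemma 9): let O be an ALC ontology, C an ALC concept, and ⟶_O the arrow relation of the ontology category defined in the context. If C is set-theoretically unsatisfiable with respect to O (i.e., C^I = ∅ in every model I of O), then C ⟶_O ⊥, i.e., C is category-theoretically unsatisfiable with respect to O. -/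
namespace ALCCompleteness

open ALCConcept

variable {CN RN : Type} (O : Set (ALCConcept CN RN × ALCConcept CN RN))

/-! ### Derived arrows -/

lemma arr_sup_comm (C D : ALCConcept CN RN) :
    ALCArrow O (.sup C D) (.sup D C) :=
  .sup_univ (.sup_right D C) (.sup_left D C)

lemma arr_contra {C D : ALCConcept CN RN} (h : ALCArrow O C D) :
    ALCArrow O (.neg D) (.neg C) :=
  .neg_max (.trans (.inf_univ (.trans (.inf_left _ _) h) (.inf_right _ _)) (.neg_bot D))

lemma arr_dne (C : ALCConcept CN RN) : ALCArrow O (.neg (.neg C)) C :=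
  .neg_min (.trans (.neg_top C) (arr_sup_comm O C (.neg C)))

/-! ### Conjunctions of finite lists -/

def conjL : List (ALCConcept CN RN) → ALCConcept CN RN
  | [] => .top
  | x :: L => .inf x (conjL L)

lemma conj_mem {L : List (ALCConcept CN RN)} {x : ALCConcept CN RN} (hx : x ∈ L) :
    ALCArrow O (conjL L) x := by
  induction L with
  | nil => cases hx
  | cons a L ih =>
    rcases List.mem_cons.mp hx with rfl | hx
    · exact .inf_left _ _
    · exact .trans (.inf_right _ _) (ih hx)

lemma le_conj {K : ALCConcept CN RN} : ∀ {L : List (ALCConcept CN RN)},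
    (∀ x ∈ L, ALCArrow O K x) → ALCArrow O K (conjL L)
  | [], _ => .le_top K
  | x :: L, h => .inf_univ (h x List.mem_cons_self)
      (le_conj (fun y hy => h y (List.mem_cons_of_mem x hy)))

/-! ### Consistent and maximal consistent sets -/

def Consistent (S : Set (ALCConcept CN RN)) : Prop :=
  ∀ L : List (ALCConcept CN RN), (∀ x ∈ L, x ∈ S) →
    ¬ ALCArrow O (conjL L) .bot

def MCS (Γ : Set (ALCConcept CN RN)) : Prop :=
  Consistent O Γ ∧ ∀ X, X ∈ Γ ∨ ALCConcept.neg X ∈ Γ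

lemma mcs_not_both {Γ : Set (ALCConcept CN RN)} (hΓ : MCS O Γ) {X : ALCConcept CN RN}
    (h1 : X ∈ Γ) (h2 : ALCConcept.neg X ∈ Γ) : False :=
  hΓ.1 [X, .neg X]
    (by intro y hy; simp at hy; rcases hy with rfl | rfl <;> assumption)
    (.trans (.inf_univ (.inf_left _ _) (.trans (.inf_right _ _) (.inf_left _ _)))
      (.neg_bot X))

lemma mcs_closed {Γ : Set (ALCConcept CN RN)} (hΓ : MCS O Γ) {X Y : ALCConcept CN RN}
    (hX : X ∈ Γ) (h : ALCArrow O X Y) : Y ∈ Γ := by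
  rcases hΓ.2 Y with hY | hY
  · exact hY
  · exact absurd
      (ALCArrow.trans (.inf_univ (.trans (.inf_left _ _) h)
        (.trans (.inf_right _ _) (.inf_left _ _))) (.neg_bot Y) :
        ALCArrow O (conjL [X, .neg Y]) .bot)
      (hΓ.1 [X, .neg Y]
        (by intro y hy; simp at hy; rcases hy with rfl | rfl <;> assumption))

lemma mcs_bot {Γ : Set (ALCConcept CN RN)} (hΓ : MCS O Γ) :
    (ALCConcept.bot : ALCConcept CN RN) ∉ Γ := fun hb =>
  hΓ.1 [.bot] (by intro y hy; simp at hy; subst hy; exact hb) (.inf_left _ _)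

lemma mcs_top {Γ : Set (ALCConcept CN RN)} (hΓ : MCS O Γ) :
    (ALCConcept.top : ALCConcept CN RN) ∈ Γ := by
  rcases hΓ.2 .top with h | h
  · exact h
  · exact mcs_closed O hΓ h (.le_top _)

lemma mcs_neg_iff {Γ : Set (ALCConcept CN RN)} (hΓ : MCS O Γ) {X : ALCConcept CN RN} :
    ALCConcept.neg X ∈ Γ ↔ X ∉ Γ :=
  ⟨fun h2 h1 => mcs_not_both O hΓ h1 h2, fun h => (hΓ.2 X).resolve_left h⟩

lemma mcs_inf_iff {Γ : Set (ALCConcept CN RN)} (hΓ : MCS O Γ) {X Y : ALCConcept CN RN} :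
    ALCConcept.inf X Y ∈ Γ ↔ X ∈ Γ ∧ Y ∈ Γ := by
  constructor
  · exact fun h => ⟨mcs_closed O hΓ h (.inf_left _ _), mcs_closed O hΓ h (.inf_right _ _)⟩
  · rintro ⟨hX, hY⟩
    by_contra hn
    have hn' := (mcs_neg_iff O hΓ).mpr hn
    exact hΓ.1 [X, Y, .neg (.inf X Y)]
      (by intro y hy; simp at hy; rcases hy with rfl | rfl | rfl <;> assumption)
      (.trans (.inf_univ
          (.inf_univ (.inf_left _ _) (.trans (.inf_right _ _) (.inf_left _ _)))
          (.trans (.inf_right _ _) (.trans (.inf_right _ _) (.inf_left _ _))))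
        (.neg_bot (.inf X Y)))

lemma mcs_sup_iff {Γ : Set (ALCConcept CN RN)} (hΓ : MCS O Γ) {X Y : ALCConcept CN RN} :
    ALCConcept.sup X Y ∈ Γ ↔ X ∈ Γ ∨ Y ∈ Γ := by
  constructor
  · intro h
    by_contra hn
    push_neg at hn
    have hX := (mcs_neg_iff O hΓ).mpr hn.1
    have hY := (mcs_neg_iff O hΓ).mpr hn.2
    have key : ALCArrow O (.inf (.inf (.neg X) (.neg Y)) (.sup X Y)) .bot :=
      .trans (.distrib _ _ _) (.sup_univ
        (.trans (.inf_univ (.inf_right _ _) (.trans (.inf_left _ _) (.inf_left _ _)))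
          (.neg_bot X))
        (.trans (.inf_univ (.inf_right _ _) (.trans (.inf_left _ _) (.inf_right _ _)))
          (.neg_bot Y)))
    have hmem : ALCConcept.inf (.inf (.neg X) (.neg Y)) (.sup X Y) ∈ Γ :=
      (mcs_inf_iff O hΓ).mpr ⟨(mcs_inf_iff O hΓ).mpr ⟨hX, hY⟩, h⟩
    exact mcs_bot O hΓ (mcs_closed O hΓ hmem key)
  · rintro (h | h)
    · exact mcs_closed O hΓ h (.sup_left _ _)
    · exact mcs_closed O hΓ h (.sup_right _ _)

/-! ### Lindenbaum lemma -/

lemma split_list {S : Set (ALCConcept CN RN)} {X : ALCConcept CN RN} :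
    ∀ L : List (ALCConcept CN RN), (∀ x ∈ L, x ∈ insert X S) →
      ∃ L', (∀ x ∈ L', x ∈ S) ∧ ALCArrow O (.inf X (conjL L')) (conjL L)
  | [], _ => ⟨[], by simp, .le_top _⟩
  | a :: L, h => by
    obtain ⟨L', hL', harr⟩ := split_list L (fun x hx => h x (List.mem_cons_of_mem a hx))
    rcases Set.mem_insert_iff.mp (h a List.mem_cons_self) with rfl | ha
    · exact ⟨L', hL', .inf_univ (.inf_left _ _) harr⟩
    · refine ⟨a :: L', ?_, ?_⟩
      · intro x hx
        rcases List.mem_cons.mp hx with rfl | hx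
        · exact ha
        · exact hL' x hx
      · exact .inf_univ (.trans (.inf_right _ _) (.inf_left _ _))
          (.trans (.inf_univ (.inf_left _ _)
            (.trans (.inf_right _ _) (.inf_right _ _))) harr)

lemma insert_incons {S : Set (ALCConcept CN RN)} {X : ALCConcept CN RN}
    (h : ¬ Consistent O (insert X S)) :
    ∃ L, (∀ x ∈ L, x ∈ S) ∧ ALCArrow O (.inf X (conjL L)) .bot := by
  unfold Consistent at h
  push_neg at h
  obtain ⟨L, hL, harr⟩ := h
  obtain ⟨L', hL', h'⟩ := split_list O L hL
  exact ⟨L', hL', .trans h' harr⟩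

lemma chain_finds {c : Set (Set (ALCConcept CN RN))} (hc : IsChain (· ⊆ ·) c)
    (hne : c.Nonempty) :
    ∀ L : List (ALCConcept CN RN), (∀ x ∈ L, x ∈ ⋃₀ c) → ∃ T ∈ c, ∀ x ∈ L, x ∈ T := by
  intro L
  induction L with
  | nil => exact fun _ => ⟨hne.choose, hne.choose_spec, by simp⟩
  | cons a L ih =>
    intro hL
    obtain ⟨T, hT, hTL⟩ := ih (fun x hx => hL x (List.mem_cons_of_mem a hx))
    obtain ⟨Ta, hTa, haa⟩ := Set.mem_sUnion.mp (hL a List.mem_cons_self)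
    rcases hc.total hT hTa with hss | hss
    · refine ⟨Ta, hTa, fun x hx => ?_⟩
      rcases List.mem_cons.mp hx with rfl | hx
      · exact haa
      · exact hss (hTL x hx)
    · refine ⟨T, hT, fun x hx => ?_⟩
      rcases List.mem_cons.mp hx with rfl | hx
      · exact hss haa
      · exact hTL x hx

lemma lindenbaum {S : Set (ALCConcept CN RN)} (hS : Consistent O S) :
    ∃ Γ, S ⊆ Γ ∧ MCS O Γ := by
  obtain ⟨Γ, hSΓ, hmax⟩ := zorn_subset_nonempty {T | Consistent O T}
    (fun c hc hchain hcne =>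
      ⟨⋃₀ c, fun L hL harr => by
        obtain ⟨T, hT, hTL⟩ := chain_finds hchain hcne L hL
        exact hc hT L hTL harr,
       fun s hs => Set.subset_sUnion_of_mem hs⟩) S hS
  refine ⟨Γ, hSΓ, hmax.prop, fun X => ?_⟩
  by_contra hn
  push_neg at hn
  have h1 : ¬ Consistent O (insert X Γ) := fun hcon =>
    hn.1 (hmax.mem_of_prop_insert hcon)
  have h2 : ¬ Consistent O (insert (ALCConcept.neg X) Γ) := fun hcon =>
    hn.2 (hmax.mem_of_prop_insert hcon)
  obtain ⟨L1, hL1, ha1⟩ := insert_incons O h1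
  obtain ⟨L2, hL2, ha2⟩ := insert_incons O h2
  refine hmax.prop (L1 ++ L2) (fun x hx => ?_) ?_
  · rcases List.mem_append.mp hx with hx | hx
    · exact hL1 x hx
    · exact hL2 x hx
  · have p1 : ALCArrow O (conjL (L1 ++ L2)) (conjL L1) :=
      le_conj O fun x hx => conj_mem O (List.mem_append_left _ hx)
    have p2 : ALCArrow O (conjL (L1 ++ L2)) (conjL L2) :=
      le_conj O fun x hx => conj_mem O (List.mem_append_right _ hx)
    exact .trans (.inf_univ (.trans p1 (.neg_max ha1)) (.trans p2 (.neg_max ha2)))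
      (.neg_bot (.neg X))

/-! ### The witness (existence) lemma -/

lemma witness {Γ : Set (ALCConcept CN RN)} (hΓ : MCS O Γ) {R : RN} {X : ALCConcept CN RN}
    (hex : ALCConcept.ex R X ∈ Γ) :
    ∃ Δ, MCS O Δ ∧ X ∈ Δ ∧ ∀ D, ALCConcept.all R D ∈ Γ → D ∈ Δ := by
  have hcons : Consistent O (insert X {D | ALCConcept.all R D ∈ Γ}) := by
    intro L hL harr
    have key : ∀ L : List (ALCConcept CN RN),
        (∀ x ∈ L, x ∈ insert X {D | ALCConcept.all R D ∈ Γ}) →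
        ALCConcept.ex R (.inf X (conjL L)) ∈ Γ := by
      intro L
      induction L with
      | nil =>
        exact fun _ => mcs_closed O hΓ hex (.ex_mono R (.inf_univ (.refl X) (.le_top X)))
      | cons a L ih =>
        intro hmem
        have hIH := ih (fun x hx => hmem x (List.mem_cons_of_mem a hx))
        rcases Set.mem_insert_iff.mp (hmem a List.mem_cons_self) with rfl | ha
        · exact mcs_closed O hΓ hIH (.ex_mono R (.inf_univ (.inf_left _ _) (.refl _)))
        · have hinf : ALCConcept.inf (.ex R (.inf X (conjL L))) (.all R a) ∈ Γ :=
            (mcs_inf_iff O hΓ).mpr ⟨hIH, ha⟩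
          refine mcs_closed O hΓ hinf (.trans (.ex_all R a _) (.ex_mono R ?_))
          exact .inf_univ (.trans (.inf_left _ _) (.inf_left _ _))
            (.inf_univ (.inf_right _ _) (.trans (.inf_left _ _) (.inf_right _ _)))
    exact mcs_bot O hΓ
      (mcs_closed O hΓ (key L hL) (.ex_bot R (.trans (.inf_right _ _) harr)))
  obtain ⟨Δ, hSΔ, hΔ⟩ := lindenbaum O hcons
  exact ⟨Δ, hΔ, hSΔ (Set.mem_insert _ _), fun D hD => hSΔ (Set.mem_insert_of_mem _ hD)⟩

/-! ### The canonical model -/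

noncomputable def canon (hne : ∃ Γ, MCS O Γ) : ALCInterp CN RN where
  Δ := {Γ : Set (ALCConcept CN RN) // MCS O Γ}
  nonempty := ⟨⟨hne.choose, hne.choose_spec⟩⟩
  conceptI A := {Γ | ALCConcept.atom A ∈ Γ.1}
  roleI R := {p | ∀ D, ALCConcept.all R D ∈ p.1.1 → D ∈ p.2.1}

lemma truth (hne : ∃ Γ, MCS O Γ) :
    ∀ (E : ALCConcept CN RN) (Γ : (canon O hne).Δ),
      E ∈ Γ.1 ↔ Γ ∈ (canon O hne).interp E := by
  intro E
  induction E with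
  | atom A => exact fun Γ => Iff.rfl
  | top =>
    intro Γ
    simp only [ALCInterp.interp, Set.mem_univ, iff_true]
    exact mcs_top O Γ.2
  | bot =>
    intro Γ
    simp only [ALCInterp.interp, Set.mem_empty_iff_false, iff_false]
    exact mcs_bot O Γ.2
  | neg C ih =>
    intro Γ
    rw [mcs_neg_iff O Γ.2, ih Γ]
    exact Iff.rfl
  | inf C D ihC ihD =>
    intro Γ
    rw [mcs_inf_iff O Γ.2, ihC Γ, ihD Γ]
    exact Iff.rfl
  | sup C D ihC ihD =>
    intro Γ
    rw [mcs_sup_iff O Γ.2, ihC Γ, ihD Γ]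
    exact Iff.rfl
  | ex R C ih =>
    intro Γ
    constructor
    · intro h
      obtain ⟨Δ, hΔ, hCΔ, hrole⟩ := witness O Γ.2 h
      exact ⟨⟨Δ, hΔ⟩, hrole, (ih ⟨Δ, hΔ⟩).mp hCΔ⟩
    · rintro ⟨Δ, hrole, hC⟩
      by_contra hn
      have h1 : ALCConcept.neg (.ex R C) ∈ Γ.1 := (mcs_neg_iff O Γ.2).mpr hn
      have arr : ALCArrow O (.neg (.ex R C)) (.all R (.neg C)) :=
        .trans (arr_contra O (.ex_mono R (arr_dne O C))) (.all_def2 R (.neg C))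
      have h2 := mcs_closed O Γ.2 h1 arr
      have h3 : ALCConcept.neg C ∈ Δ.1 := hrole (.neg C) h2
      exact mcs_not_both O Δ.2 ((ih Δ).mpr hC) h3
  | all R C ih =>
    intro Γ
    constructor
    · intro h Δ hrole
      exact (ih Δ).mp (hrole C h)
    · intro hall
      by_contra hn
      have h1 := (mcs_neg_iff O Γ.2).mpr hn
      have arr : ALCArrow O (.neg (.all R C)) (.ex R (.neg C)) :=
        .trans (arr_contra O (.all_def2 R C)) (arr_dne O _)
      have h2 := mcs_closed O Γ.2 h1 arr
      obtain ⟨Δ, hΔ, hnC, hrole⟩ := witness O Γ.2 h2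
      have hCmem := hall ⟨Δ, hΔ⟩ hrole
      exact mcs_not_both O hΔ ((ih ⟨Δ, hΔ⟩).mpr hCmem) hnC

lemma canon_model (hne : ∃ Γ, MCS O Γ) : (canon O hne).isModel O := by
  rintro ⟨E, F⟩ hEF Γ hΓE
  have hE : E ∈ Γ.1 := (truth O hne E Γ).mpr hΓE
  have h1 : ALCConcept.sup (.neg E) F ∈ Γ.1 :=
    mcs_closed O Γ.2 (mcs_top O Γ.2) (.gci hEF)
  rcases (mcs_sup_iff O Γ.2).mp h1 with hneg | hF
  · exact (mcs_not_both O Γ.2 hE hneg).elim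
  · exact (truth O hne F Γ).mp hF

end ALCCompleteness


/-- Completeness of categorical unsatisfiability (Lemma 9): if `C` is
set-theoretically unsatisfiable w.r.t. `O`, then `C ⟶_O ⊥`. -/
theorem set_unsat_to_cat_unsat {CN RN : Type}
    (O : Set (ALCConcept CN RN × ALCConcept CN RN)) (hfin : O.Finite)
    (C : ALCConcept CN RN)
    (h : ∀ I : ALCInterp CN RN, I.isModel O → I.interp C = ∅) :
    ALCArrow O C .bot := by
  by_contra hC
  have hcons : ALCCompleteness.Consistent O {C} := by
    intro L hL harr
    refine hC (.trans (ALCCompleteness.le_conj O fun x hx => ?_) harr)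
    rw [Set.mem_singleton_iff.mp (hL x hx)]
    exact .refl C
  obtain ⟨Γ, hCΓ, hΓ⟩ := ALCCompleteness.lindenbaum O hcons
  have hne : ∃ Γ, ALCCompleteness.MCS O Γ := ⟨Γ, hΓ⟩
  have hmodel := ALCCompleteness.canon_model O hne
  have hempty := h _ hmodel
  have hmem : (⟨Γ, hΓ⟩ : (ALCCompleteness.canon O hne).Δ) ∈
      (ALCCompleteness.canon O hne).interp C :=
    (ALCCompleteness.truth O hne C ⟨Γ, hΓ⟩).mp (hCΓ rfl)
  rw [hempty] at hmem
  exact hmem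
end
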